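/- Let p, q : ℝ² → ℝ be smooth functions such that x·p(x, y) = y·q(x, y) for all (x, y) ∈ ℝ². Then there exists a smooth function M : ℝ² → ℝ such that p(x, y) = y·M(x, y) and q(x, y) = x·M(x, y) for all (x, y) ∈ ℝ². -/

import Mathlib

open Filter Topology ContinuousMultilinearMap
open scoped ENNReal NNReal

noncomputable section CrossDiv

variable {n : ℕ}

end CrossDiv

noncomputable section CrossDiv2

open ContinuousMultilinearMap

end CrossDiv2

noncomputable section CrossDiv3

open Filter Topology

end CrossDiv3

open Filter Topology

lemma param_smooth : ∀ n : ℕ, ∀ (G : Type) [NormedAddCommGroup G] [NormedSpace ℝ G]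
    [CompleteSpace G] (H : (ℝ × ℝ) × ℝ → G), ContDiff ℝ (⊤ : ℕ∞) H →
    ContDiff ℝ n (fun z => ∫ t in (0:ℝ)..1, H (z, t)) := by
  intro n
  induction n with
  | zero =>
    intro G _ _ _ H hH
    exact contDiff_zero.2
      (intervalIntegral.continuous_parametric_intervalIntegral_of_continuous'
        (f := fun z t => H (z, t)) hH.continuous 0 1)
  | succ n ih =>
    intro G _ _ _ H hH
    rw [Nat.cast_succ, contDiff_succ_iff_hasFDerivAt]
    set H' : (ℝ × ℝ) × ℝ → ((ℝ × ℝ) →L[ℝ] G) :=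
      fun w => (fderiv ℝ H w).comp (ContinuousLinearMap.inl ℝ (ℝ × ℝ) ℝ) with hH'def
    have hH' : ContDiff ℝ (⊤ : ℕ∞) H' :=
      (hH.fderiv_right (m := ((⊤ : ℕ∞) : WithTop ℕ∞)) (by simp)).clm_comp contDiff_const
    refine ⟨fun z => ∫ t in (0:ℝ)..1, H' (z, t), ih _ H' hH', fun z => ?_⟩
    obtain ⟨C, hC⟩ := (((isCompact_closedBall z 1).prod isCompact_Icc) :
      IsCompact (Metric.closedBall z 1 ×ˢ Set.Icc (0:ℝ) 1)).exists_bound_of_continuousOn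
        hH'.continuous.continuousOn
    have hcH : ∀ x : ℝ × ℝ, Continuous fun t : ℝ => H (x, t) := fun x =>
      hH.continuous.comp (continuous_const.prodMk continuous_id)
    have hcH' : ∀ x : ℝ × ℝ, Continuous fun t : ℝ => H' (x, t) := fun x =>
      hH'.continuous.comp (continuous_const.prodMk continuous_id)
    show HasFDerivAt (fun x => ∫ t in (0:ℝ)..1, H (x, t)) (∫ t in (0:ℝ)..1, H' (z, t)) z
    apply intervalIntegral.hasFDerivAt_integral_of_dominated_of_fderiv_le
      (F := fun x t => H (x, t)) (F' := fun x t => H' (x, t))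
      (s := Metric.ball z 1) (bound := fun _ => C)
    · exact Metric.ball_mem_nhds z one_pos
    · exact Eventually.of_forall fun x => (hcH x).aestronglyMeasurable
    · exact (hcH z).intervalIntegrable 0 1
    · exact (hcH' z).aestronglyMeasurable
    · refine Eventually.of_forall fun t ht x hx => hC (x, t) ⟨Metric.ball_subset_closedBall hx, ?_⟩
      rw [Set.uIoc_of_le zero_le_one] at ht
      exact Set.Ioc_subset_Icc_self ht
    · exact intervalIntegrable_const
    · refine Eventually.of_forall fun t _ x _ => ?_
      exact ((hH.differentiable (by simp)) (x, t)).hasFDerivAt.comp x (hasFDerivAt_prodMk_left x t)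

lemma hadamard_div (p : ℝ × ℝ → ℝ) (hp : ContDiff ℝ (⊤ : ℕ∞) p) (hp0 : ∀ x : ℝ, p (x, 0) = 0) :
    ∃ P : ℝ × ℝ → ℝ, ContDiff ℝ (⊤ : ℕ∞) P ∧ ∀ z : ℝ × ℝ, p z = z.2 * P z := by
  set H : (ℝ × ℝ) × ℝ → ℝ := fun w => fderiv ℝ p (w.1.1, w.2 * w.1.2) ((0:ℝ), (1:ℝ)) with hHdef
  have hH : ContDiff ℝ (⊤ : ℕ∞) H :=
    ((hp.fderiv_right (m := ((⊤ : ℕ∞) : WithTop ℕ∞)) (by simp)).comp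
      (by fun_prop : ContDiff ℝ (⊤ : ℕ∞) fun w : (ℝ × ℝ) × ℝ => (w.1.1, w.2 * w.1.2))).clm_apply
      contDiff_const
  refine ⟨fun z => ∫ t in (0:ℝ)..1, H (z, t), contDiff_infty.2 fun n => param_smooth n ℝ H hH,
    fun z => ?_⟩
  show p z = z.2 * ∫ t in (0:ℝ)..1, H (z, t)
  have hd : ∀ t ∈ Set.uIcc (0:ℝ) 1,
      HasDerivAt (fun t : ℝ => p (z.1, t * z.2)) (z.2 * H (z, t)) t := by
    intro t _
    have h1 : HasDerivAt (fun t : ℝ => (z.1, t * z.2)) ((0:ℝ), 1 * z.2) t :=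
      (hasDerivAt_const t z.1).prodMk ((hasDerivAt_id t).mul_const z.2)
    have h2 := ((hp.differentiable (by simp)) (z.1, t * z.2)).hasFDerivAt.comp_hasDerivAt t h1
    have h3 : z.2 * H (z, t) = fderiv ℝ p (z.1, t * z.2) ((0:ℝ), 1 * z.2) := by
      show z.2 * fderiv ℝ p (z.1, t * z.2) ((0:ℝ), (1:ℝ)) = _
      rw [one_mul, show ((0:ℝ), z.2) = z.2 • ((0:ℝ), (1:ℝ)) by simp, map_smul, smul_eq_mul]
    rw [h3]
    exact h2
  have := intervalIntegral.integral_eq_sub_of_hasDerivAt hd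
    ((continuous_const.mul (hH.continuous.comp (continuous_const.prodMk continuous_id))).intervalIntegrable 0 1)
  rw [intervalIntegral.integral_const_mul] at this
  simp only [one_mul, zero_mul] at this
  have e : p z = p (z.1, z.2) := rfl
  rw [e]
  linarith [this, hp0 z.1]

/-- If `p, q : ℝ² → ℝ` are smooth and `x·p(x,y) = y·q(x,y)` everywhere, then there is a
smooth `M` with `p = y·M` and `q = x·M`. -/
theorem cross_division (p q : ℝ × ℝ → ℝ) (hp : ContDiff ℝ (⊤ : ℕ∞) p) (hq : ContDiff ℝ (⊤ : ℕ∞) q)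
    (h : ∀ z : ℝ × ℝ, z.1 * p z = z.2 * q z) :
    ∃ M : ℝ × ℝ → ℝ, ContDiff ℝ (⊤ : ℕ∞) M ∧
      ∀ z : ℝ × ℝ, p z = z.2 * M z ∧ q z = z.1 * M z := by
  have hpc : Continuous p := hp.continuous
  have hqc : Continuous q := hq.continuous
  -- vanishing on the axes
  have hp0 : ∀ x : ℝ, p (x, 0) = 0 := by
    have hfun : (fun x : ℝ => p (x, 0)) = fun _ => (0:ℝ) := by
      apply Continuous.ext_on (dense_compl_singleton (0:ℝ))
        (hpc.comp (continuous_id.prodMk continuous_const)) continuous_const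
      intro x hx
      have hx0 : x ≠ 0 := hx
      have := h (x, 0)
      simp only [zero_mul, mul_comm] at this
      -- this : x * p (x,0) = 0
      have h2 : x * p (x, 0) = 0 := by simpa using h (x, 0)
      rcases mul_eq_zero.1 h2 with h3 | h3
      · exact absurd h3 hx0
      · exact h3
    exact fun x => congrFun hfun x
  have hq0 : ∀ y : ℝ, q (0, y) = 0 := by
    have hfun : (fun y : ℝ => q (0, y)) = fun _ => (0:ℝ) := by
      apply Continuous.ext_on (dense_compl_singleton (0:ℝ))
        (hqc.comp (continuous_const.prodMk continuous_id)) continuous_const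
      intro y hy
      have hy0 : y ≠ 0 := hy
      have h2 : y * q (0, y) = 0 := by
        have := h (0, y); simpa using this.symm
      rcases mul_eq_zero.1 h2 with h3 | h3
      · exact absurd h3 hy0
      · exact h3
    exact fun y => congrFun hfun y
  obtain ⟨P, hPs, hPeq⟩ := hadamard_div p hp hp0
  refine ⟨P, hPs, fun z => ⟨hPeq z, ?_⟩⟩
  have hS : Dense {z : ℝ × ℝ | z.1 ≠ 0 ∧ z.2 ≠ 0} := by
    have hEq : {z : ℝ × ℝ | z.1 ≠ 0 ∧ z.2 ≠ 0} = (({0}ᶜ : Set ℝ) ×ˢ ({0}ᶜ : Set ℝ)) := by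
      ext z; simp [Set.mem_prod]
    rw [hEq]
    exact (dense_compl_singleton 0).prod (dense_compl_singleton 0)
  have hfun : q = fun z => z.1 * P z := by
    apply Continuous.ext_on hS hqc (continuous_fst.mul hPs.continuous)
    intro w hw
    have h3 := h w
    rw [hPeq w] at h3
    apply mul_left_cancel₀ hw.2
    show w.2 * q w = w.2 * (w.1 * P w)
    linear_combination -h3
  exact congrFun hfun z
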